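/- arXiv:2305.06623 — 2 statements merged into one kernel-verified Lean document; each statement's English description precedes it below -/
import Mathlib

section
/- Let Φ be the linear functional on ℚ(q)[z] determined by Φ([n,z choose n]_q) = 1/(-q^2;q)_n for all n ≥ 0. Then for all n ≥ 0, Φ([n+1,z choose n]_q) = (1+q)/q − 1/(q·(-q^2;q)_n). -/
set_option maxHeartbeats 1000000
set_option synthInstance.maxHeartbeats 200000

open Finset Polynomial

noncomputable def q : RatFunc ℚ := RatFunc.X

/-- q-integer `[k]_q = (1-q^k)/(1-q)` for `k : ℤ`. -/
noncomputable def qint (k : ℤ) : RatFunc ℚ := (1 - q ^ k) / (1 - q)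

/-- q-factorial `[n]_q!`. -/
noncomputable def qfact (n : ℕ) : RatFunc ℚ := ∏ m ∈ Finset.range n, qint (m + 1)

/-- q-Pochhammer `(A;Q)_n`. -/
noncomputable def qPoch (Q A : RatFunc ℚ) (n : ℕ) : RatFunc ℚ :=
  ∏ j ∈ Finset.range n, (1 - A * Q ^ j)

/-- The generalized q-binomial polynomial `[m, z choose n]_q`. -/
noncomputable def qbinomPoly (m n : ℕ) : Polynomial (RatFunc ℚ) :=
  Polynomial.C (qfact n)⁻¹ *
    ∏ k ∈ Finset.Icc ((m : ℤ) - n + 1) (m : ℤ),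
      (Polynomial.C (qint k) + Polynomial.C (q ^ k) * Polynomial.X)

lemma alg_inj : Function.Injective (algebraMap (Polynomial ℚ) (RatFunc ℚ)) :=
  IsFractionRing.injective _ _

lemma q_eq : q = algebraMap (Polynomial ℚ) (RatFunc ℚ) Polynomial.X := (RatFunc.algebraMap_X).symm

lemma one_sub_q_pow_ne (k : ℕ) (hk : k ≠ 0) : (1 : RatFunc ℚ) - q ^ k ≠ 0 := by
  rw [q_eq, ← map_pow, ← map_one (algebraMap (Polynomial ℚ) (RatFunc ℚ)), ← map_sub]
  intro h
  have := alg_inj (h.trans (map_zero _).symm)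
  have h2 := congrArg (Polynomial.eval 0) this
  simp [Polynomial.eval_pow, zero_pow hk] at h2

lemma one_add_q_pow_ne (k : ℕ) : (1 : RatFunc ℚ) + q ^ k ≠ 0 := by
  rw [q_eq, ← map_pow, ← map_one (algebraMap (Polynomial ℚ) (RatFunc ℚ)), ← map_add]
  intro h
  have := alg_inj (h.trans (map_zero _).symm)
  have h2 := congrArg (Polynomial.eval 1) this
  simp at h2

lemma q_ne : (q : RatFunc ℚ) ≠ 0 := by
  rw [q_eq]; simpa using fun h => by simpa using alg_inj (h.trans (map_zero _).symm)

lemma one_sub_q_ne : (1 : RatFunc ℚ) - q ≠ 0 := by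
  simpa using one_sub_q_pow_ne 1 one_ne_zero

lemma qint_nat (k : ℕ) : qint (k : ℤ) = (1 - q ^ k) / (1 - q) := by
  rw [qint, zpow_natCast]

lemma qint_ne (k : ℕ) (hk : k ≠ 0) : qint (k : ℤ) ≠ 0 := by
  rw [qint_nat]
  exact div_ne_zero (one_sub_q_pow_ne k hk) one_sub_q_ne

lemma qfact_ne (n : ℕ) : qfact n ≠ 0 := by
  rw [qfact]
  exact Finset.prod_ne_zero_iff.2 fun m _ => by
    exact_mod_cast qint_ne (m + 1) (Nat.succ_ne_zero m)

lemma qPoch_ne (n : ℕ) : qPoch q (-q ^ 2) n ≠ 0 := by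
  rw [qPoch]
  refine Finset.prod_ne_zero_iff.2 fun j _ => ?_
  have : (1 : RatFunc ℚ) - -q ^ 2 * q ^ j = 1 + q ^ (2 + j) := by ring
  rw [this]; exact one_add_q_pow_ne (2 + j)

-- the factor
noncomputable def fac (k : ℤ) : Polynomial (RatFunc ℚ) :=
  Polynomial.C (qint k) + Polynomial.C (q ^ k) * Polynomial.X

lemma fac_identity (n : ℕ) :
    fac ((n : ℤ) + 2) = Polynomial.C (q ^ ((n : ℤ) + 1)) * fac 1 + Polynomial.C (qint ((n : ℤ) + 1)) := by
  have h1 : qint 1 = 1 := by rw [qint, zpow_one, div_self one_sub_q_ne]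
  rw [fac, fac, h1]
  have hq2 : (q : RatFunc ℚ) ^ ((n : ℤ) + 2) = q ^ ((n : ℤ) + 1) * q ^ (1 : ℤ) := by
    rw [← zpow_add₀ q_ne]; ring_nf
  have hqint : qint ((n : ℤ) + 2) = q ^ ((n : ℤ) + 1) * 1 + qint ((n : ℤ) + 1) := by
    rw [qint, qint]
    have e2 : ((n : ℤ) + 2) = ((n + 2 : ℕ) : ℤ) := by push_cast; ring
    have e1 : ((n : ℤ) + 1) = ((n + 1 : ℕ) : ℤ) := by push_cast; ring
    rw [e2, e1, zpow_natCast, zpow_natCast]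
    field_simp [one_sub_q_ne]
    ring
  rw [hqint, hq2, zpow_one]
  simp only [Polynomial.C_add, Polynomial.C_mul, map_one]
  ring

lemma key (n : ℕ) : qbinomPoly (n + 2) (n + 1) =
    Polynomial.C (q ^ ((n : ℤ) + 1)) * qbinomPoly (n + 1) (n + 1) + qbinomPoly (n + 1) n := by
  have e1 : ((n + 2 : ℕ) : ℤ) - ((n + 1 : ℕ) : ℤ) + 1 = 2 := by push_cast; ring
  have e2 : ((n + 1 : ℕ) : ℤ) - ((n + 1 : ℕ) : ℤ) + 1 = 1 := by push_cast; ring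
  have e3 : ((n + 1 : ℕ) : ℤ) - (n : ℤ) + 1 = 2 := by push_cast; ring
  have etop : ((n + 2 : ℕ) : ℤ) = ((n : ℤ) + 1) + 1 := by push_cast; ring
  have etop1 : ((n + 1 : ℕ) : ℤ) = (n : ℤ) + 1 := by push_cast; ring
  show Polynomial.C (qfact (n+1))⁻¹ * ∏ k ∈ Finset.Icc _ _, fac k =
    Polynomial.C (q ^ ((n : ℤ) + 1)) * (Polynomial.C (qfact (n+1))⁻¹ * ∏ k ∈ Finset.Icc _ _, fac k)
    + Polynomial.C (qfact n)⁻¹ * ∏ k ∈ Finset.Icc _ _, fac k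
  rw [e1, e2, e3, etop, etop1]
  -- split products
  have hsplit_top : ∏ k ∈ Finset.Icc (2 : ℤ) ((n : ℤ) + 1 + 1), fac k =
      (∏ k ∈ Finset.Icc (2 : ℤ) ((n : ℤ) + 1), fac k) * fac ((n : ℤ) + 2) := by
    have hins2 : Finset.Icc (2 : ℤ) ((n : ℤ) + 1 + 1) =
        insert ((n : ℤ) + 2) (Finset.Icc (2 : ℤ) ((n : ℤ) + 1)) := by
      ext x; simp; omega
    rw [hins2, Finset.prod_insert (by simp)]
    ring
  have hins : Finset.Icc (1 : ℤ) ((n : ℤ) + 1) = insert 1 (Finset.Icc (2 : ℤ) ((n : ℤ) + 1)) := by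
    ext x; simp; omega
  have hsplit_bot : ∏ k ∈ Finset.Icc (1 : ℤ) ((n : ℤ) + 1), fac k =
      fac 1 * ∏ k ∈ Finset.Icc (2 : ℤ) ((n : ℤ) + 1), fac k := by
    rw [hins, Finset.prod_insert (by simp)]
  have hqf : qfact (n + 1) = qfact n * qint ((n : ℤ) + 1) := by
    rw [qfact, qfact, Finset.prod_range_succ]
  have hC : Polynomial.C (qfact (n+1))⁻¹ * Polynomial.C (qint ((n : ℤ) + 1)) =
      (Polynomial.C (qfact n)⁻¹ : Polynomial (RatFunc ℚ)) := by
    rw [← Polynomial.C_mul, hqf]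
    congr 1
    rw [mul_inv]
    rw [mul_assoc, inv_mul_cancel₀ (by exact_mod_cast qint_ne (n+1) (Nat.succ_ne_zero n)), mul_one]
  rw [hsplit_top, hsplit_bot, fac_identity]
  ring_nf
  rw [← hC]
  ring

theorem Phi_qbinomPoly_succ (Φ : Polynomial (RatFunc ℚ) →ₗ[RatFunc ℚ] RatFunc ℚ)
    (hΦ : ∀ n : ℕ, Φ (qbinomPoly n n) = (qPoch q (-q ^ 2) n)⁻¹) :
    ∀ n : ℕ, Φ (qbinomPoly (n + 1) n) = (1 + q) / q - 1 / (q * qPoch q (-q ^ 2) n) := by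
  intro n
  induction n with
  | zero =>
      have hbase : qbinomPoly 1 0 = qbinomPoly 0 0 := by
        rw [qbinomPoly, qbinomPoly]
        norm_num
      rw [hbase, hΦ 0]
      rw [qPoch]
      simp only [Finset.range_zero, Finset.prod_empty, inv_one, mul_one]
      rw [div_sub_div_same, add_sub_cancel_left, div_self q_ne]
  | succ n ih =>
      have hk := key n
      have : Φ (qbinomPoly (n + 2) (n + 1)) =
          q ^ ((n : ℤ) + 1) * Φ (qbinomPoly (n + 1) (n + 1)) + Φ (qbinomPoly (n + 1) n) := by
        rw [hk, map_add]
        congr 1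
        rw [← Polynomial.smul_eq_C_mul, map_smul, smul_eq_mul]
      rw [show n + 1 + 1 = n + 2 from rfl, this, hΦ (n + 1), ih]
      have hz : (q : RatFunc ℚ) ^ ((n : ℤ) + 1) = q ^ (n + 1 : ℕ) := by
        rw [← zpow_natCast]; norm_cast
      have hP : qPoch q (-q ^ 2) (n + 1) = qPoch q (-q ^ 2) n * (1 + q ^ (n + 2)) := by
        rw [qPoch, qPoch, Finset.prod_range_succ]
        ring
      have h1 : (1 : RatFunc ℚ) + q ^ (n + 2) ≠ 0 := one_add_q_pow_ne (n + 2)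
      have hPn := qPoch_ne n
      rw [hz, hP]
      have hq := q_ne
      field_simp [q_ne, hPn, h1]
      ring
end

section
/- For each nonnegative integer ℓ, the linear functional Ξ_ℓ on ℚ(q)[z] defined by Ξ_ℓ(z^n) := q^{(ℓ+1)n}(−q;q)_n/(−q^{ℓ+2};q)_n satisfies Ξ_ℓ((z;q)_n) = (q^{ℓ+1};q)_n/(−q^{ℓ+2};q)_n for all n ≥ 0. -/
set_option synthInstance.maxHeartbeats 1000000
set_option maxHeartbeats 1000000


open Finset

lemma qPoch_succ (Q A : RatFunc ℚ) (n : ℕ) :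
    qPoch Q A (n + 1) = qPoch Q A n * (1 - A * Q ^ n) :=
  Finset.prod_range_succ _ _

lemma one_add_q_pow_ne_zero (m : ℕ) (hm : m ≠ 0) : (1 : RatFunc ℚ) + q ^ m ≠ 0 := by
  have h1 : (1 + Polynomial.X ^ m : Polynomial ℚ) ≠ 0 := by
    intro h
    have := congrArg (Polynomial.eval 0) h
    simp [zero_pow hm] at this
  have h2 : (1 : RatFunc ℚ) + q ^ m
      = algebraMap (Polynomial ℚ) (RatFunc ℚ) (1 + Polynomial.X ^ m) := by
    simp [q, ← RatFunc.algebraMap_X]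
  rw [h2]
  exact RatFunc.algebraMap_ne_zero h1

lemma den_factor_ne_zero (ℓ j : ℕ) : (1 : RatFunc ℚ) - (-q ^ (ℓ + 2)) * q ^ j ≠ 0 := by
  have h : (1 : RatFunc ℚ) - (-q ^ (ℓ + 2)) * q ^ j = 1 + q ^ (ℓ + 2 + j) := by ring
  rw [h]
  exact one_add_q_pow_ne_zero _ (by omega)

lemma qPoch_den_ne_zero (ℓ n : ℕ) : qPoch q (-q ^ (ℓ + 2)) n ≠ 0 := by
  unfold qPoch
  exact Finset.prod_ne_zero_iff.mpr fun j _ => den_factor_ne_zero ℓ j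

/-- the moments -/
noncomputable def mu (ℓ n : ℕ) : RatFunc ℚ :=
  q ^ ((ℓ + 1) * n) * qPoch q (-q) n / qPoch q (-q ^ (ℓ + 2)) n

lemma mu_rec (ℓ n : ℕ) :
    mu ℓ (n + 1) - q ^ (ℓ + 1) * mu ℓ n
      = q ^ (ℓ + 2) * q ^ n * (mu ℓ n - mu ℓ (n + 1)) := by
  have c0 : mu ℓ n * qPoch q (-q ^ (ℓ + 2)) n
      = q ^ ((ℓ + 1) * n) * qPoch q (-q) n := by
    unfold mu; exact div_mul_cancel₀ _ (qPoch_den_ne_zero ℓ n)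
  have c1 : mu ℓ (n + 1) * qPoch q (-q ^ (ℓ + 2)) (n + 1)
      = q ^ ((ℓ + 1) * (n + 1)) * qPoch q (-q) (n + 1) := by
    unfold mu; exact div_mul_cancel₀ _ (qPoch_den_ne_zero ℓ (n + 1))
  rw [qPoch_succ, qPoch_succ] at c1
  apply mul_right_cancel₀ (qPoch_den_ne_zero ℓ (n + 1))
  rw [qPoch_succ]
  linear_combination (1 + q ^ (ℓ + 2) * q ^ n) * c1
    + (-(q ^ (ℓ + 1)) - q ^ (ℓ + 2) * q ^ n) * (1 - -q ^ (ℓ + 2) * q ^ n) * c0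

lemma key_s18 (ℓ : ℕ) (Ξ : Polynomial (RatFunc ℚ) →ₗ[RatFunc ℚ] RatFunc ℚ)
    (hΞ : ∀ n : ℕ, Ξ (Polynomial.X ^ n) = mu ℓ n) (p : Polynomial (RatFunc ℚ)) :
    Ξ ((Polynomial.X - Polynomial.C (q ^ (ℓ + 1))) * p)
      = q ^ (ℓ + 2) * Ξ ((1 - Polynomial.X) * p.comp (Polynomial.C q * Polynomial.X)) := by
  induction p using Polynomial.induction_on' with
  | add p r hp hr =>
      simp only [mul_add, Polynomial.add_comp, map_add, hp, hr]
      try ring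
  | monomial n a =>
      rw [← Polynomial.C_mul_X_pow_eq_monomial]
      have e1 : (Polynomial.X - Polynomial.C (q ^ (ℓ + 1))) * (Polynomial.C a * Polynomial.X ^ n)
          = a • Polynomial.X ^ (n + 1) - (q ^ (ℓ + 1) * a) • Polynomial.X ^ n := by
        simp only [Polynomial.smul_eq_C_mul, map_mul, map_pow]
        ring
      have e2 : (1 - Polynomial.X) *
            (Polynomial.C a * Polynomial.X ^ n).comp (Polynomial.C q * Polynomial.X)
          = (a * q ^ n) • Polynomial.X ^ n - (a * q ^ n) • Polynomial.X ^ (n + 1) := by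
        simp only [Polynomial.mul_comp, Polynomial.C_comp, Polynomial.pow_comp,
          Polynomial.X_comp, Polynomial.smul_eq_C_mul, map_mul, map_pow]
        ring
      rw [e1, e2, map_sub, map_sub, map_smul, map_smul, map_smul, map_smul,
        smul_eq_mul, smul_eq_mul, smul_eq_mul, smul_eq_mul, hΞ, hΞ]
      linear_combination a * mu_rec ℓ n

theorem Xi_qPochPoly (ℓ : ℕ) (Ξ : Polynomial (RatFunc ℚ) →ₗ[RatFunc ℚ] RatFunc ℚ)
    (hΞ : ∀ n : ℕ, Ξ (Polynomial.X ^ n) =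
      q ^ ((ℓ + 1) * n) * qPoch q (-q) n / qPoch q (-q ^ (ℓ + 2)) n) :
    ∀ n : ℕ,
      Ξ (∏ j ∈ Finset.range n, (1 - Polynomial.X * Polynomial.C (q ^ j))) =
        qPoch q (q ^ (ℓ + 1)) n / qPoch q (-q ^ (ℓ + 2)) n := by
  have hΞ' : ∀ n : ℕ, Ξ (Polynomial.X ^ n) = mu ℓ n := hΞ
  intro n
  induction n with
  | zero =>
      have h0 := hΞ' 0
      simp [mu, qPoch] at h0 ⊢
      exact h0
  | succ n ih =>
      have hD := qPoch_den_ne_zero ℓ n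
      -- abbreviation for the degree-n product
      have hsplit : (∏ j ∈ Finset.range (n + 1), (1 - Polynomial.X * Polynomial.C (q ^ j)))
          = (∏ j ∈ Finset.range n, (1 - Polynomial.X * Polynomial.C (q ^ j)))
            - q ^ n • (Polynomial.X *
              ∏ j ∈ Finset.range n, (1 - Polynomial.X * Polynomial.C (q ^ j))) := by
        rw [Finset.prod_range_succ]
        simp only [Polynomial.smul_eq_C_mul, map_pow]
        ring
      have hcomp : (∏ j ∈ Finset.range n, (1 - Polynomial.X * Polynomial.C (q ^ j))).comp
            (Polynomial.C q * Polynomial.X)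
          = ∏ j ∈ Finset.range n, (1 - Polynomial.X * Polynomial.C (q ^ (j + 1))) := by
        rw [Polynomial.prod_comp]
        refine Finset.prod_congr rfl fun j _ => ?_
        simp only [Polynomial.sub_comp, Polynomial.one_comp, Polynomial.mul_comp,
          Polynomial.X_comp, Polynomial.C_comp, Polynomial.pow_comp, map_pow]
        ring
      have hfirst : (∏ j ∈ Finset.range (n + 1), (1 - Polynomial.X * Polynomial.C (q ^ j)))
          = (1 - Polynomial.X) *
            (∏ j ∈ Finset.range n, (1 - Polynomial.X * Polynomial.C (q ^ j))).comp
              (Polynomial.C q * Polynomial.X) := by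
        rw [hcomp, Finset.prod_range_succ']
        simp only [pow_zero, map_one, mul_one]
        ring
      have hkey := key_s18 ℓ Ξ hΞ' (∏ j ∈ Finset.range n, (1 - Polynomial.X * Polynomial.C (q ^ j)))
      have e3 : (Polynomial.X - Polynomial.C (q ^ (ℓ + 1))) *
            (∏ j ∈ Finset.range n, (1 - Polynomial.X * Polynomial.C (q ^ j)))
          = Polynomial.X * (∏ j ∈ Finset.range n, (1 - Polynomial.X * Polynomial.C (q ^ j)))
            - q ^ (ℓ + 1) • (∏ j ∈ Finset.range n, (1 - Polynomial.X * Polynomial.C (q ^ j))) := by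
        simp only [Polynomial.smul_eq_C_mul, map_pow]
        ring
      rw [e3, map_sub, map_smul, smul_eq_mul, ← hfirst] at hkey
      have h2 : Ξ (∏ j ∈ Finset.range (n + 1), (1 - Polynomial.X * Polynomial.C (q ^ j)))
          = Ξ (∏ j ∈ Finset.range n, (1 - Polynomial.X * Polynomial.C (q ^ j)))
            - q ^ n * Ξ (Polynomial.X *
                ∏ j ∈ Finset.range n, (1 - Polynomial.X * Polynomial.C (q ^ j))) := by
        rw [hsplit, map_sub, map_smul, smul_eq_mul]
      have hb : Ξ (∏ j ∈ Finset.range (n + 1), (1 - Polynomial.X * Polynomial.C (q ^ j)))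
            * (1 + q ^ (ℓ + 2 + n))
          = Ξ (∏ j ∈ Finset.range n, (1 - Polynomial.X * Polynomial.C (q ^ j)))
            * (1 - q ^ (ℓ + 1 + n)) := by
        linear_combination h2 - q ^ n * hkey
      have ihc : Ξ (∏ j ∈ Finset.range n, (1 - Polynomial.X * Polynomial.C (q ^ j)))
            * qPoch q (-q ^ (ℓ + 2)) n = qPoch q (q ^ (ℓ + 1)) n := by
        rw [ih, div_mul_cancel₀ _ hD]
      have hden : qPoch q (-q ^ (ℓ + 2)) n * (1 - (-q ^ (ℓ + 2)) * q ^ n) ≠ 0 :=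
        mul_ne_zero hD (den_factor_ne_zero ℓ n)
      rw [qPoch_succ, qPoch_succ, eq_div_iff hden]
      linear_combination qPoch q (-q ^ (ℓ + 2)) n * hb + (1 - q ^ (ℓ + 1 + n)) * ihc
end
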